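/- A perfect elimination ordering of a tree (for instance, repeatedly removing leaves) is also a perfect elimination ordering of its square. -/

import Mathlib

open SimpleGraph

/-- `t < toughness of G`: for every vertex cut `X` (a set whose removal leaves
more than one connected component), `t * (number of components of G - X) < |X|`. -/
def SimpleGraph.ToughnessGT {V : Type*} [Fintype V] (G : SimpleGraph V) (t : ℝ) : Prop :=
  ∀ X : Set V, 1 < Nat.card (G.induce Xᶜ).ConnectedComponent →
    t * Nat.card (G.induce Xᶜ).ConnectedComponent < X.ncard

/-- `G` is `t`-tough: for every vertex cut `X`, `t * (number of components) ≤ |X|`. -/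
def SimpleGraph.ToughGE {V : Type*} [Fintype V] (G : SimpleGraph V) (t : ℝ) : Prop :=
  ∀ X : Set V, 1 < Nat.card (G.induce Xᶜ).ConnectedComponent →
    t * Nat.card (G.induce Xᶜ).ConnectedComponent ≤ X.ncard

/-- `G` is a `k`-tree: it can be built from `K_k` by repeatedly adding a vertex
whose neighbourhood among the previously added vertices is a `k`-clique. -/
def SimpleGraph.IsKTree {V : Type*} [Fintype V] (k : ℕ) (G : SimpleGraph V) : Prop :=
  k ≤ Fintype.card V ∧
    ∃ e : V ≃ Fin (Fintype.card V),
      ∀ v : V, G.IsClique {w : V | G.Adj v w ∧ e w < e v} ∧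
        Set.ncard {w : V | G.Adj v w ∧ e w < e v} = min (e v : ℕ) k

/-- The bud of a vertex `v` in a `k`-tree: its neighbours of degree `k`. -/
def SimpleGraph.bud {V : Type*} (G : SimpleGraph V) (k : ℕ) (v : V) : Set V :=
  {w : V | G.Adj v w ∧ (G.neighborSet w).ncard = k}

/-- `v` is a twig of the `k`-tree `G`: `v` is not universal, the set `S` of its
neighbours of degree `k` is nonempty, and `N(v) \ S` induces `K_k`. -/
def SimpleGraph.IsTwig {V : Type*} (G : SimpleGraph V) (k : ℕ) (v : V) : Prop :=
  (∃ w, w ≠ v ∧ ¬ G.Adj v w) ∧ (G.bud k v).Nonempty ∧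
    G.IsClique (G.neighborSet v \ G.bud k v) ∧ (G.neighborSet v \ G.bud k v).ncard = k

/-- `S` is a squeeze by `v`. -/
def SimpleGraph.IsSqueeze {V : Type*} (G : SimpleGraph V) (v : V) (S : Set V) : Prop :=
  S ⊆ G.neighborSet v ∧ 1 ≤ S.ncard ∧ S.ncard ≤ 2 ∧
    2 ≤ (G.neighborSet v \ S).ncard ∧
    (∀ s ∈ S, (G.neighborSet v \ S).ncard - 1 ≤ ((G.neighborSet v \ S) ∩ G.neighborSet s).ncard) ∧
    (∀ r ∈ G.neighborSet v \ S, S.ncard - 1 ≤ (S ∩ G.neighborSet r).ncard)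

/-- A chordal graph: every cycle of length at least 4 has a chord, i.e. an edge of `G`
between two vertices of the cycle that is not an edge of the cycle. -/
def SimpleGraph.IsChordal {V : Type*} (G : SimpleGraph V) : Prop :=
  ∀ (v : V) (c : G.Walk v v), c.IsCycle → 4 ≤ c.length →
    ∃ x y, x ∈ c.support ∧ y ∈ c.support ∧ G.Adj x y ∧ s(x, y) ∉ c.edges

/-- `H` is a minor of `G`, witnessed by branch sets. -/
def SimpleGraph.HasMinor {V W : Type*} (G : SimpleGraph V) (H : SimpleGraph W) : Prop :=
  ∃ f : W → Set V, (∀ w, (f w).Nonempty) ∧ (∀ w, (G.induce (f w)).Connected) ∧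
    (Pairwise (Function.onFun Disjoint f)) ∧
    ∀ w₁ w₂, H.Adj w₁ w₂ → ∃ a ∈ f w₁, ∃ b ∈ f w₂, G.Adj a b

/-- Planarity, via Wagner's theorem: no `K₅` or `K_{3,3}` minor. -/
def SimpleGraph.IsPlanar {V : Type*} (G : SimpleGraph V) : Prop :=
  ¬ G.HasMinor (completeGraph (Fin 5)) ∧ ¬ G.HasMinor (completeBipartiteGraph (Fin 3) (Fin 3))

/-- `G` is `k`-connected. -/
def SimpleGraph.IsKConnected {V : Type*} [Fintype V] (k : ℕ) (G : SimpleGraph V) : Prop :=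
  k + 1 ≤ Fintype.card V ∧ ∀ X : Set V, X.ncard < k → (G.induce Xᶜ).Connected

/-- The square of a graph: two vertices are adjacent iff their distance is 1 or 2. -/
def SimpleGraph.square {V : Type*} (G : SimpleGraph V) : SimpleGraph V where
  Adj v w := v ≠ w ∧ (G.Adj v w ∨ ∃ u, G.Adj v u ∧ G.Adj u w)
  symm := by
    refine ⟨?_⟩
    rintro v w ⟨hne, h | ⟨u, h1, h2⟩⟩
    · exact ⟨hne.symm, Or.inl h.symm⟩
    · exact ⟨hne.symm, Or.inr ⟨u, h2.symm, h1.symm⟩⟩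
  loopless := ⟨by rintro v ⟨hne, -⟩; exact hne rfl⟩

/-- `G` is Hamilton-connected. -/
def SimpleGraph.IsHamiltonConnected {V : Type*} (G : SimpleGraph V) : Prop :=
  ∀ x y : V, x ≠ y → ∃ p : G.Walk x y, p.IsPath ∧ ∀ w, w ∈ p.support

/-- `e` is a perfect elimination ordering of `G`: each vertex is simplicial in the
subgraph induced by it and the earlier vertices. -/
def SimpleGraph.IsPEO {V : Type*} [Fintype V] (G : SimpleGraph V)
    (e : V ≃ Fin (Fintype.card V)) : Prop :=
  ∀ v : V, G.IsClique {w : V | G.Adj v w ∧ e w < e v}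

/-!
In a triangle-free graph, a perfect elimination ordering gives every vertex at most one
earlier neighbour, its parent. An earlier vertex at distance two from `v` is reached through
the parent, since a later middle vertex would have two earlier neighbours. So all earlier
neighbours of `v` in the square lie in the closed neighbourhood of the parent, which is a
clique of the square.
-/

namespace SimpleGraph

theorem square_adj_of_eq_or_adj {V : Type*} {G : SimpleGraph V} {a x y : V}
    (hx : a = x ∨ G.Adj a x) (hy : a = y ∨ G.Adj a y) (hxy : x ≠ y) : G.square.Adj x y := by
  refine ⟨hxy, ?_⟩
  rcases hx with rfl | hax <;> rcases hy with rfl | hay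
  · exact absurd rfl hxy
  · exact Or.inl hay
  · exact Or.inl hax.symm
  · exact Or.inr ⟨a, hax.symm, hay⟩

variable {V : Type*} [Fintype V] {G : SimpleGraph V} {e : V ≃ Fin (Fintype.card V)}

theorem IsPEO.eq_of_adj_of_lt (he : G.IsPEO e) (hG : G.CliqueFree 3) {v a b : V}
    (hva : G.Adj v a) (hvb : G.Adj v b) (hav : e a < e v) (hbv : e b < e v) : a = b := by
  classical
  by_contra hab
  exact hG {v, a, b} (is3Clique_triple_iff.mpr ⟨hva, hvb, he v ⟨hva, hav⟩ ⟨hvb, hbv⟩ hab⟩)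

theorem IsPEO.exists_earlier_adj_of_square_adj (he : G.IsPEO e) (hG : G.CliqueFree 3)
    {v x : V} (hvx : G.square.Adj v x) (hx : e x < e v) :
    ∃ a, G.Adj v a ∧ e a < e v ∧ (a = x ∨ G.Adj a x) := by
  obtain ⟨hne, hvx | ⟨u, hvu, hux⟩⟩ := hvx
  · exact ⟨x, hvx, hx, Or.inl rfl⟩
  · rcases lt_or_gt_of_ne (e.injective.ne hvu.ne') with huv | hvu'
    · exact ⟨u, hvu, huv, Or.inr hux⟩
    · exact absurd (he.eq_of_adj_of_lt hG hvu.symm hux hvu' (hx.trans hvu')) hne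

theorem IsPEO.square (he : G.IsPEO e) (hG : G.CliqueFree 3) : G.square.IsPEO e := by
  rintro v x ⟨hvx, hx⟩ y ⟨hvy, hy⟩ hxy
  obtain ⟨a, hva, hav, hax⟩ := he.exists_earlier_adj_of_square_adj hG hvx hx
  obtain ⟨b, hvb, hbv, hby⟩ := he.exists_earlier_adj_of_square_adj hG hvy hy
  obtain rfl := he.eq_of_adj_of_lt hG hva hvb hav hbv
  exact square_adj_of_eq_or_adj hax hby hxy

end SimpleGraph

theorem peo_of_tree_peo_of_square {V : Type*} [Fintype V]
    (T : SimpleGraph V) (hT : T.IsTree) (e : V ≃ Fin (Fintype.card V))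
    (he : T.IsPEO e) :
    T.square.IsPEO e :=
  he.square (hT.isAcyclic.cliqueFree le_rfl)
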